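/- arXiv:1409.6172 — 5 statements merged into one kernel-verified Lean document; each statement's English description precedes it below -/
import Mathlib

section
/- In a finite game tree with strict preferences, at any step of the PPE construction, the outcome in the set of non-discarded outcomes that gives the highest payoff to the current player can never be discarded by any Newcombian State. Hence the set of remaining outcomes after the discarding process at any node is non-empty. -/
open Classical

section PPE

variable {O C : Type*} [Fintype O] [DecidableEq O] [DecidableEq C]

/-- Target set of a Newcombian State (a list of children of the current node),
defined recursively from the remaining-outcome set `I`, the descendant map `D`
and the current player's payoff `pay`. -/
noncomputable def target (I : Finset O) (D : C → Finset O) (pay : O → ℤ) :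
    List C → Finset O
  | [] => ∅
  | [n] => I ∩ D n
  | n :: m :: p =>
      let Tp := target I D pay (m :: p)
      (I ∩ D n).filter (fun o => ¬ (Tp.Nonempty ∧ ∀ o' ∈ Tp, pay o < pay o'))

/-- A Newcombian State at the current node: a nonempty list of children with no
two consecutive elements equal. -/
def ValidState (F : Finset C) (η : List C) : Prop :=
  η ≠ [] ∧ (∀ n ∈ η, n ∈ F) ∧ η.Chain' (· ≠ ·)

/-- `o` is discarded by some Newcombian State at the current node. -/
def Discards (I : Finset O) (D : C → Finset O) (pay : O → ℤ) (F : Finset C)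
    (o : O) : Prop :=
  ∃ n p, ValidState F (n :: p) ∧ o ∈ I ∧ o ∉ D n ∧
    (target I D pay (n :: p)).Nonempty ∧
    ∀ o' ∈ target I D pay (n :: p), pay o < pay o'

/-- The set of outcomes remaining after the discarding process at the current node. -/
noncomputable def survivors (I : Finset O) (D : C → Finset O) (pay : O → ℤ)
    (F : Finset C) : Finset O :=
  I.filter (fun o => ¬ Discards I D pay F o)

/-- Worst payoff of a Newcombian State. -/
noncomputable def wp (I : Finset O) (D : C → Finset O) (pay : O → ℤ)
    (η : List C) : ℤ :=
  sInf (pay '' (target I D pay η : Set O))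

end PPE

section PPE

variable {O C : Type*} [Fintype O] [DecidableEq O]
  (I : Finset O) (D : C → Finset O) (pay : O → ℤ) (F : Finset C)

theorem target_subset : ∀ η : List C, target I D pay η ⊆ I
  | [] => Finset.empty_subset I
  | [_] => Finset.inter_subset_left
  | _ :: _ :: _ => (Finset.filter_subset _ _).trans Finset.inter_subset_left

/-- Discarding `o` requires a nonempty target set, inside `I`, all of whose outcomes beat `o`. -/
theorem not_discards_of_forall_le {omax : O} (hmax : ∀ o ∈ I, pay o ≤ pay omax) :
    ¬ Discards I D pay F omax := by
  rintro ⟨n, p, -, -, -, ⟨o, ho⟩, hlt⟩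
  exact (hlt o ho).not_ge (hmax o (target_subset I D pay (n :: p) ho))

theorem survivors_nonempty (hI : I.Nonempty) : (survivors I D pay F).Nonempty := by
  obtain ⟨omax, hmem, hmax⟩ := I.exists_max_image pay hI
  exact ⟨omax, Finset.mem_filter.mpr ⟨hmem, not_discards_of_forall_le I D pay F hmax⟩⟩

end PPE

theorem ppe_best_outcome_never_discarded_general
    {O C : Type*} [Fintype O] [DecidableEq O]
    (I : Finset O) (D : C → Finset O) (pay : O → ℤ) (F : Finset C)
    (hI : I.Nonempty) :
    (∀ omax ∈ I, (∀ o ∈ I, pay o ≤ pay omax) → ¬ Discards I D pay F omax) ∧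
    (survivors I D pay F).Nonempty :=
  ⟨fun _ _ hmax => not_discards_of_forall_le I D pay F hmax, survivors_nonempty I D pay F hI⟩

/-- the outcome of `I` with the highest payoff for the current
player can never be discarded by any Newcombian State; hence the set of
remaining outcomes after the discarding process is non-empty. -/
theorem ppe_best_outcome_never_discarded
    {O C : Type*} [Fintype O] [DecidableEq O] [DecidableEq C]
    (I : Finset O) (D : C → Finset O) (pay : O → ℤ) (F : Finset C)
    (hI : I.Nonempty)
    (hcov : ∀ o ∈ I, ∃ c ∈ F, o ∈ D c)
    (hdisj : ∀ c c' : C, c ≠ c' → Disjoint (D c) (D c'))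
    (hpay : Function.Injective pay) :
    (∀ omax ∈ I, (∀ o ∈ I, pay o ≤ pay omax) → ¬ Discards I D pay F omax) ∧
    (survivors I D pay F).Nonempty :=
  ppe_best_outcome_never_discarded_general I D pay F hI
end

section
/- In a finite game tree with strict preferences, at any node c reached by the PPE construction with nonempty remaining-outcome set I, after discarding all outcomes discardable by Newcombian States at c, all remaining outcomes are descendants of exactly one child of c. That is, there exists a unique child f of c such that the remaining set intersects D(f). -/
open Classical

/-!
The outcome `M` of highest payoff in `I` survives, since nothing in `I` beats it; say
`M ∈ D f`. An outcome `x` below another child `g` is discarded: otherwise `x` stays in the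
target of every state `g :: f :: g :: ⋯ :: g` (the `f`-prefixed states keep `M` in their
target, which therefore never lies entirely above `x`), while the worst payoff strictly
increases with every alternation because the children are disjoint and payoffs are injective.
As the worst payoff of a state containing `x` is at most `pay x`, this cannot go on forever.
-/

section

open Function

variable {O C : Type*} [Fintype O] [DecidableEq O]
  {I : Finset O} {D : C → Finset O} {pay : O → ℤ} {F : Finset C}

theorem target_cons_subset (n : C) (p : List C) : target I D pay (n :: p) ⊆ I ∩ D n := by
  cases p <;> simp [target]

theorem mem_target_cons_cons {n m : C} {p : List C} {o : O} :
    o ∈ target I D pay (n :: m :: p) ↔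
      o ∈ I ∩ D n ∧ ((target I D pay (m :: p)).Nonempty →
        ∃ u ∈ target I D pay (m :: p), pay u ≤ pay o) := by
  simp only [target, Finset.mem_filter, not_and, not_forall, not_lt, exists_prop]

theorem ValidState.singleton {n : C} (hn : n ∈ F) : ValidState F [n] :=
  ⟨List.cons_ne_nil _ _, by simpa using hn, List.isChain_singleton _⟩

theorem ValidState.cons {n m : C} {p : List C} (h : ValidState F (m :: p)) (hn : n ∈ F)
    (hnm : n ≠ m) : ValidState F (n :: m :: p) :=
  ⟨List.cons_ne_nil _ _, List.forall_mem_cons.2 ⟨hn, h.2.1⟩, List.isChain_cons_cons.2 ⟨hnm, h.2.2⟩⟩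

theorem wp_le_of_mem_target {η : List C} {o : O} (ho : o ∈ target I D pay η) :
    wp I D pay η ≤ pay o :=
  csInf_le ((Finset.finite_toSet _).image pay).bddBelow ⟨o, ho, rfl⟩

theorem exists_mem_target_pay_eq_wp {η : List C} (h : (target I D pay η).Nonempty) :
    ∃ o ∈ target I D pay η, pay o = wp I D pay η :=
  Int.csInf_mem ((Finset.coe_nonempty.2 h).image pay) ((Finset.finite_toSet _).image pay).bddBelow

theorem wp_lt_wp_cons (hdisj : Pairwise (Disjoint on D)) (hpay : Injective pay)
    {n m : C} {p : List C} (hnm : n ≠ m) (hm : (target I D pay (m :: p)).Nonempty)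
    (hn : (target I D pay (n :: m :: p)).Nonempty) :
    wp I D pay (m :: p) < wp I D pay (n :: m :: p) := by
  obtain ⟨o, ho, hwp⟩ := exists_mem_target_pay_eq_wp hn
  obtain ⟨u, hu, huo⟩ := (mem_target_cons_cons.1 ho).2 hm
  have hou : o ≠ u := fun h => Finset.disjoint_left.1 (hdisj hnm)
    (Finset.mem_inter.1 (target_cons_subset n _ ho)).2
    (h ▸ (Finset.mem_inter.1 (target_cons_subset m p hu)).2)
  calc wp I D pay (m :: p) ≤ pay u := wp_le_of_mem_target hu
    _ < pay o := lt_of_le_of_ne huo (hpay.ne hou).symm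
    _ = wp I D pay (n :: m :: p) := hwp

theorem mem_survivors_of_forall_le {M : O} (hM : M ∈ I) (hmax : ∀ y ∈ I, pay y ≤ pay M) :
    M ∈ survivors I D pay F := by
  refine Finset.mem_filter.2 ⟨hM, ?_⟩
  rintro ⟨n, p, -, -, -, ⟨o, ho⟩, hall⟩
  exact (hall o ho).not_ge (hmax o (Finset.mem_inter.1 (target_cons_subset n p ho)).1)

theorem notMem_target_of_not_discards (hdisj : Pairwise (Disjoint on D))
    (hpay : Injective pay) {f g : C} (hfg : f ≠ g) (hf : f ∈ F) {M x : O}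
    (hM : M ∈ I ∩ D f) (hxM : pay x ≤ pay M) (hx : ¬ Discards I D pay F x)
    (p : List C) (hp : ValidState F (g :: p)) :
    x ∉ target I D pay (g :: p) := by
  intro hxT
  have hxI : x ∈ I ∩ D g := target_cons_subset g p hxT
  have hMT : M ∈ target I D pay (f :: g :: p) :=
    mem_target_cons_cons.2 ⟨hM, fun _ => ⟨x, hxT, hxM⟩⟩
  have hxf : x ∉ D f := fun h => Finset.disjoint_left.1 (hdisj hfg) h (Finset.mem_inter.1 hxI).2
  have hp' : ValidState F (f :: g :: p) := hp.cons hf hfg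
  have hxT' : x ∈ target I D pay (g :: f :: g :: p) := by
    refine mem_target_cons_cons.2 ⟨hxI, fun hne => ?_⟩
    by_contra! habove
    exact hx ⟨f, g :: p, hp', (Finset.mem_inter.1 hxI).1, hxf, hne, habove⟩
  have h₁ := wp_lt_wp_cons hdisj hpay hfg ⟨x, hxT⟩ ⟨M, hMT⟩
  have h₂ := wp_lt_wp_cons hdisj hpay hfg.symm ⟨M, hMT⟩ ⟨x, hxT'⟩
  have h₃ := wp_le_of_mem_target hxT'
  exact notMem_target_of_not_discards hdisj hpay hfg hf hM hxM hx (f :: g :: p)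
    (hp'.cons (hp.2.1 g List.mem_cons_self) hfg.symm) hxT'
termination_by (pay x - wp I D pay (g :: p)).toNat
decreasing_by omega

theorem discards_of_pay_le (hdisj : Pairwise (Disjoint on D)) (hpay : Injective pay)
    {f g : C} (hfg : f ≠ g) (hf : f ∈ F) (hg : g ∈ F) {M x : O} (hM : M ∈ I ∩ D f)
    (hx : x ∈ I ∩ D g) (hxM : pay x ≤ pay M) : Discards I D pay F x := by
  by_contra hnd
  exact notMem_target_of_not_discards hdisj hpay hfg hf hM hxM hnd [] (.singleton hg)
    (by simpa [target] using hx)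

end

theorem ppe_unique_next_child_general
    {O C : Type*} [Fintype O] [DecidableEq O]
    (I : Finset O) (D : C → Finset O) (pay : O → ℤ) (F : Finset C)
    (hI : I.Nonempty)
    (hcov : ∀ o ∈ I, ∃ c ∈ F, o ∈ D c)
    (hdisj : ∀ c c' : C, c ≠ c' → Disjoint (D c) (D c'))
    (hpay : Function.Injective pay) :
    ∃! f : C, f ∈ F ∧ ((survivors I D pay F) ∩ D f).Nonempty := by
  obtain ⟨M, hMI, hmax⟩ := I.exists_max_image pay hI
  obtain ⟨f, hf, hMf⟩ := hcov M hMI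
  have hsurv : survivors I D pay F ⊆ D f := by
    intro s hs
    obtain ⟨hsI, hnd⟩ := Finset.mem_filter.1 hs
    obtain ⟨g, hg, hsg⟩ := hcov s hsI
    by_contra hsf
    have hfg : f ≠ g := by rintro rfl; exact hsf hsg
    exact hnd (discards_of_pay_le hdisj hpay hfg hf hg (Finset.mem_inter.2 ⟨hMI, hMf⟩)
      (Finset.mem_inter.2 ⟨hsI, hsg⟩) (hmax s hsI))
  refine ⟨f, ⟨hf, M, Finset.mem_inter.2 ⟨mem_survivors_of_forall_le hMI hmax, hMf⟩⟩, ?_⟩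
  rintro g ⟨-, s, hs⟩
  obtain ⟨hss, hsg⟩ := Finset.mem_inter.1 hs
  by_contra hgf
  exact Finset.disjoint_left.1 (hdisj g f hgf) hsg (hsurv hss)

/-- after discarding all outcomes discardable by Newcombian States
at the current node, all remaining outcomes are descendants of exactly one child:
there is a unique child `f` such that the remaining set intersects `D f`. -/
theorem ppe_unique_next_child
    {O C : Type*} [Fintype O] [DecidableEq O] [DecidableEq C]
    (I : Finset O) (D : C → Finset O) (pay : O → ℤ) (F : Finset C)
    (hI : I.Nonempty)
    (hcov : ∀ o ∈ I, ∃ c ∈ F, o ∈ D c)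
    (hdisj : ∀ c c' : C, c ≠ c' → Disjoint (D c) (D c'))
    (hpay : Function.Injective pay) :
    ∃! f : C, f ∈ F ∧ ((survivors I D pay F) ∩ D f).Nonempty :=
  ppe_unique_next_child_general I D pay F hI hcov hdisj hpay
end

section
/- In a finite game tree with strict preferences, the Perfect Prediction Equilibrium exists and is unique: the iterative process of discarding outcomes at successive nodes (starting at the root, moving at each step to the unique child containing all remaining outcomes) terminates with exactly one outcome. -/
open Classical

/-- A finite two-player extensive-form game tree with perfect information:
leaves carry a pair of payoffs (Peter's, Mary's); internal nodes carry the
player to move (`true` = Peter, `false` = Mary) and a list of children. -/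
inductive GameTree where
  | leaf (pP pM : ℤ) : GameTree
  | node (player : Bool) (children : List GameTree) : GameTree

namespace GameTree

/-- The list of outcomes (leaf payoff pairs) of a game tree. -/
def outcomes : GameTree → List (ℤ × ℤ)
  | .leaf p m => [(p, m)]
  | .node _ ts => ts.attach.flatMap (fun t => outcomes t.1)
decreasing_by
  have := List.sizeOf_lt_of_mem t.2
  simp only [GameTree.node.sizeOf_spec]
  omega

/-- The payoff of a given player at an outcome. -/
def payOf (pl : Bool) (o : ℤ × ℤ) : ℤ := if pl then o.1 else o.2

/-- Every internal node has a nonempty list of children. -/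
def WellFormed : GameTree → Prop
  | .leaf _ _ => True
  | .node _ ts => ts ≠ [] ∧ ∀ t ∈ ts.attach, WellFormed t.1
decreasing_by
  have := List.sizeOf_lt_of_mem t.2
  simp only [GameTree.node.sizeOf_spec]
  omega

/-- Strict preferences: each player's payoffs at the outcomes are pairwise
distinct. -/
def StrictPref (g : GameTree) : Prop :=
  (g.outcomes.map Prod.fst).Nodup ∧ (g.outcomes.map Prod.snd).Nodup

/-- Target set of a Newcombian State (a list of children subtrees) with respect
to the current player's payoff `pay` and the remaining-outcome set `I`. -/
noncomputable def target (pay : ℤ × ℤ → ℤ) (I : Finset (ℤ × ℤ)) :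
    List GameTree → Finset (ℤ × ℤ)
  | [] => ∅
  | [t] => I ∩ t.outcomes.toFinset
  | t :: u :: p =>
      let Tp := target pay I (u :: p)
      (I ∩ t.outcomes.toFinset).filter
        (fun o => ¬ (Tp.Nonempty ∧ ∀ o' ∈ Tp, pay o < pay o'))

/-- `o` is discarded by some Newcombian State at a node with children `ts`,
remaining set `I` and current-player payoff `pay`. -/
def Discards (pay : ℤ × ℤ → ℤ) (ts : List GameTree) (I : Finset (ℤ × ℤ))
    (o : ℤ × ℤ) : Prop :=
  ∃ η : List GameTree, η ≠ [] ∧ (∀ t ∈ η, t ∈ ts) ∧ η.Chain' (· ≠ ·) ∧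
    o ∈ I ∧ (∀ t ∈ η.head?, o ∉ t.outcomes.toFinset) ∧
    (target pay I η).Nonempty ∧
    ∀ o' ∈ target pay I η, pay o < pay o'

/-- The set of outcomes surviving all Newcombian-State discardings at a node. -/
noncomputable def survivors (pay : ℤ × ℤ → ℤ) (ts : List GameTree)
    (I : Finset (ℤ × ℤ)) : Finset (ℤ × ℤ) :=
  I.filter (fun o => ¬ Discards pay ts I o)

/-- The Perfect Prediction Equilibrium construction: starting from the root
with remaining set `I`, at each node discard all outcomes discarded by some
Newcombian State, then move to the unique child whose outcomes contain all
remaining outcomes; the reached leaf is the PPE outcome. -/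
inductive PPEReach : GameTree → Finset (ℤ × ℤ) → (ℤ × ℤ) → Prop
  | leaf (p m : ℤ) (I : Finset (ℤ × ℤ)) (h : (p, m) ∈ I) :
      PPEReach (.leaf p m) I (p, m)
  | node (pl : Bool) (ts : List GameTree) (I : Finset (ℤ × ℤ))
      (t : GameTree) (o : ℤ × ℤ) (ht : t ∈ ts)
      (hsub : survivors (payOf pl) ts I ⊆ t.outcomes.toFinset)
      (hrec : PPEReach t (survivors (payOf pl) ts I) o) :
      PPEReach (.node pl ts) I o

/-- Backward induction (Subgame Perfect Equilibrium) outcome: at each node the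
current player moves to the child whose backward-induction outcome maximizes
her payoff. -/
noncomputable def biOutcome : GameTree → ℤ × ℤ
  | .leaf p m => (p, m)
  | .node pl ts =>
      ((ts.attach.map (fun t => biOutcome t.1)).argmax (payOf pl)).getD (0, 0)
decreasing_by
  have := List.sizeOf_lt_of_mem t.2
  simp only [GameTree.node.sizeOf_spec]
  omega

end GameTree

/-! At a node, the favourite remaining outcome `b` of the player to move survives, since targets
only contain remaining outcomes. Every remaining outcome outside the child `t` containing `b` is
discarded by a Newcombian State starting at `t`: its next entry is the child containing the best
remaining outcome outside `t` that is worse than `b`, and so on; by induction along this chain,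
each target beats every remaining outcome outside its head that is worse than the outcome the
head was chosen for. So all survivors lie in `t`, which strict preferences make the only child
containing them, and existence and uniqueness follow by induction on the tree. -/

theorem Finset.card_filter_lt_lt_of_lt {α β : Type*} [Preorder β] [DecidableLT β]
    {s : Finset α} {f : α → β} {a b : α} (ha : a ∈ s) (hab : f a < f b) :
    (s.filter (f · < f a)).card < (s.filter (f · < f b)).card := by
  refine Finset.card_lt_card ((Finset.ssubset_iff_of_subset ?_).2 ⟨a, ?_, ?_⟩)
  · intro x hx
    rw [Finset.mem_filter] at hx ⊢
    exact ⟨hx.1, hx.2.trans hab⟩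
  · exact Finset.mem_filter.2 ⟨ha, hab⟩
  · exact fun h => lt_irrefl _ (Finset.mem_filter.1 h).2

namespace GameTree

theorem outcomes_node (pl : Bool) (ts : List GameTree) :
    (node pl ts).outcomes = ts.flatMap outcomes := by
  rw [outcomes, ← List.flatMap_map Subtype.val outcomes ts.attach, List.attach_map_subtype_val]

theorem mem_outcomes_node {pl : Bool} {ts : List GameTree} {x : ℤ × ℤ} :
    x ∈ (node pl ts).outcomes ↔ ∃ t ∈ ts, x ∈ t.outcomes := by
  rw [outcomes_node, List.mem_flatMap]

theorem WellFormed.exists_mem_outcomes :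
    ∀ {g : GameTree}, g.WellFormed → ∃ x, x ∈ g.outcomes
  | .leaf p m, _ => ⟨(p, m), by simp [outcomes]⟩
  | .node pl ts, hwf => by
    rw [WellFormed] at hwf
    obtain ⟨t, ht⟩ := List.exists_mem_of_ne_nil ts hwf.1
    obtain ⟨x, hx⟩ := (hwf.2 ⟨t, ht⟩ (List.mem_attach _ _)).exists_mem_outcomes
    exact ⟨x, mem_outcomes_node.2 ⟨t, ht, hx⟩⟩

namespace StrictPref

theorem injOn_payOf {g : GameTree} (hsp : g.StrictPref) (pl : Bool) :
    Set.InjOn (payOf pl) {x | x ∈ g.outcomes} := by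
  intro x hx y hy h
  cases pl
  · exact List.inj_on_of_nodup_map hsp.2 hx hy (by simpa [payOf] using h)
  · exact List.inj_on_of_nodup_map hsp.1 hx hy (by simpa [payOf] using h)

variable {pl : Bool} {ts : List GameTree} {t t' : GameTree}

theorem child (hsp : (node pl ts).StrictPref) (ht : t ∈ ts) : t.StrictPref := by
  simp only [StrictPref, outcomes_node, List.map_flatMap, List.nodup_flatMap] at hsp
  exact ⟨hsp.1.1 t ht, hsp.2.1 t ht⟩

theorem eq_of_mem_outcomes (hsp : (node pl ts).StrictPref) (ht : t ∈ ts) (ht' : t' ∈ ts)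
    {x : ℤ × ℤ} (hx : x ∈ t.outcomes) (hx' : x ∈ t'.outcomes) : t = t' := by
  have hnodup : (ts.flatMap outcomes).Nodup := outcomes_node pl ts ▸ hsp.1.of_map _
  have : Std.Symm (Function.onFun List.Disjoint outcomes) := ⟨fun _ _ h => h.symm⟩
  by_contra hne
  exact List.disjoint_left.1 ((List.nodup_flatMap.1 hnodup).2.forall ht ht' hne) hx hx'

end StrictPref

section Target

variable {pay : ℤ × ℤ → ℤ} {I : Finset (ℤ × ℤ)}

theorem target_singleton (t : GameTree) : target pay I [t] = I ∩ t.outcomes.toFinset := by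
  rw [target]

theorem mem_target_cons_cons {t u : GameTree} {p : List GameTree} {x : ℤ × ℤ} :
    x ∈ target pay I (t :: u :: p) ↔ (x ∈ I ∧ x ∈ t.outcomes) ∧
      ¬((target pay I (u :: p)).Nonempty ∧
        ∀ o' ∈ target pay I (u :: p), pay x < pay o') := by
  simp only [target, Finset.mem_filter, Finset.mem_inter, List.mem_toFinset]

theorem target_subset : ∀ η : List GameTree, target pay I η ⊆ I
  | [] => Finset.empty_subset _
  | [t] => target_singleton (pay := pay) t ▸ Finset.inter_subset_left
  | _ :: _ :: _ => fun _ hx => (mem_target_cons_cons.1 hx).1.1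

end Target

section Discarding

variable {pay : ℤ × ℤ → ℤ} {ts : List GameTree} {I : Finset (ℤ × ℤ)}

theorem exists_chain_mem_target (hpay : Set.InjOn pay I)
    (hcover : ∀ x ∈ I, ∃ t ∈ ts, x ∈ t.outcomes)
    (hdisj : ∀ x ∈ I, ∀ t ∈ ts, ∀ t' ∈ ts,
      x ∈ t.outcomes → x ∈ t'.outcomes → t = t')
    {b : ℤ × ℤ} (hb : b ∈ I) {t : GameTree} (ht : t ∈ ts) (hbt : b ∈ t.outcomes) :
    ∃ p : List GameTree, (∀ s ∈ t :: p, s ∈ ts) ∧ (t :: p).IsChain (· ≠ ·) ∧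
      b ∈ target pay I (t :: p) ∧
      ∀ x ∈ target pay I (t :: p), ∀ y ∈ I,
        y ∉ t.outcomes → pay y < pay b → pay y < pay x := by
  by_cases hbelow : ∃ y ∈ I, y ∉ t.outcomes ∧ pay y < pay b
  · obtain ⟨y₀, hy₀, hy₀max⟩ :=
      (I.filter fun y => y ∉ t.outcomes ∧ pay y < pay b).exists_max_image pay
        (by simpa only [Finset.filter_nonempty_iff] using hbelow)
    obtain ⟨hy₀I, hy₀t, hy₀b⟩ := Finset.mem_filter.1 hy₀
    obtain ⟨t', ht', hy₀t'⟩ := hcover y₀ hy₀I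
    have hcard := Finset.card_filter_lt_lt_of_lt (f := pay) hy₀I hy₀b
    obtain ⟨p, hpts, hpchain, hy₀T, hpdom⟩ :=
      exists_chain_mem_target hpay hcover hdisj hy₀I ht' hy₀t'
    have htt' : t ≠ t' := fun h => hy₀t (h ▸ hy₀t')
    refine ⟨t' :: p, ?_, List.isChain_cons_cons.2 ⟨htt', hpchain⟩, ?_, ?_⟩
    · exact List.forall_mem_cons.2 ⟨ht, hpts⟩
    · exact mem_target_cons_cons.2 ⟨⟨hb, hbt⟩, fun h => (h.2 y₀ hy₀T).not_gt hy₀b⟩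
    · intro x hx y hyI hyt hyb
      obtain ⟨⟨hxI, hxt⟩, hxnot⟩ := mem_target_cons_cons.1 hx
      refine (hy₀max y (Finset.mem_filter.2 ⟨hyI, hyt, hyb⟩)).trans_lt
        (lt_of_not_ge fun hxy₀ => ?_)
      -- Otherwise `x ∈ t` would be a remaining outcome outside `t'` worse than `y₀`, so the whole
      -- target of `t' :: p` would beat it and remove it from the target of `t :: t' :: p`.
      have hxlt : pay x < pay y₀ :=
        hxy₀.lt_of_ne fun h => hy₀t (hpay hxI hy₀I h ▸ hxt)
      have hxt' : x ∉ t'.outcomes := fun h => htt' (hdisj x hxI t ht t' ht' hxt h)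
      exact hxnot ⟨⟨y₀, hy₀T⟩, fun z hz => hpdom z hz x hxI hxt' hxlt⟩
  · push Not at hbelow
    refine ⟨[], by simpa using ht, List.isChain_singleton t, ?_, ?_⟩
    · rw [target_singleton]
      exact Finset.mem_inter.2 ⟨hb, List.mem_toFinset.2 hbt⟩
    · exact fun _ _ y hyI hyt hyb => absurd hyb (hbelow y hyI hyt).not_gt
termination_by (I.filter (pay · < pay b)).card
decreasing_by exact hcard

theorem mem_survivors_of_forall_le {b : ℤ × ℤ} (hb : b ∈ I)
    (hmax : ∀ x ∈ I, pay x ≤ pay b) :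
    b ∈ survivors pay ts I := by
  refine Finset.mem_filter.2 ⟨hb, ?_⟩
  rintro ⟨η, -, -, -, -, -, ⟨w, hw⟩, hlt⟩
  exact (hlt w hw).not_ge (hmax w (target_subset η hw))

theorem survivors_subset_of_forall_le (hpay : Set.InjOn pay I)
    (hcover : ∀ x ∈ I, ∃ t ∈ ts, x ∈ t.outcomes)
    (hdisj : ∀ x ∈ I, ∀ t ∈ ts, ∀ t' ∈ ts,
      x ∈ t.outcomes → x ∈ t'.outcomes → t = t')
    {b : ℤ × ℤ} (hb : b ∈ I) (hmax : ∀ x ∈ I, pay x ≤ pay b)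
    {t : GameTree} (ht : t ∈ ts) (hbt : b ∈ t.outcomes) :
    survivors pay ts I ⊆ t.outcomes.toFinset := by
  intro o ho
  obtain ⟨hoI, hkept⟩ := Finset.mem_filter.1 ho
  by_contra hot
  rw [List.mem_toFinset] at hot
  have hob : pay o < pay b :=
    (hmax o hoI).lt_of_ne fun h => hot (hpay hoI hb h ▸ hbt)
  obtain ⟨p, hpts, hpchain, hbT, hdom⟩ := exists_chain_mem_target hpay hcover hdisj hb ht hbt
  refine hkept ⟨t :: p, List.cons_ne_nil _ _, hpts, hpchain, hoI, ?_, ⟨b, hbT⟩,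
    fun x hx => hdom x hx o hoI hot hob⟩
  simpa using hot

end Discarding

theorem PPEReach.mem {g : GameTree} {I : Finset (ℤ × ℤ)} {o : ℤ × ℤ}
    (h : PPEReach g I o) : o ∈ I := by
  induction h with
  | leaf _ _ _ h => exact h
  | node _ _ _ _ _ _ _ _ ih => exact Finset.filter_subset _ _ ih

theorem PPEReach.unique {g : GameTree} {I : Finset (ℤ × ℤ)} {o o' : ℤ × ℤ}
    (hsp : g.StrictPref) (h : PPEReach g I o) (h' : PPEReach g I o') : o = o' := by
  induction h with
  | leaf => cases h'; rfl
  | node pl ts I t o ht hsub hrec ih =>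
    obtain _ | ⟨_, _, _, t', _, ht', hsub', hrec'⟩ := h'
    have ho := hrec.mem
    obtain rfl : t = t' := hsp.eq_of_mem_outcomes ht ht'
      (List.mem_toFinset.1 (hsub ho)) (List.mem_toFinset.1 (hsub' ho))
    exact ih (hsp.child ht) hrec'

theorem exists_ppeReach : ∀ {g : GameTree} {I : Finset (ℤ × ℤ)}, g.StrictPref →
    I ⊆ g.outcomes.toFinset → I.Nonempty → ∃ o, PPEReach g I o
  | .leaf p m, I, _, hI, ⟨x, hx⟩ => by
    have hxpm : x = (p, m) := by simpa [outcomes] using hI hx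
    exact ⟨(p, m), .leaf p m I (hxpm ▸ hx)⟩
  | .node pl ts, I, hsp, hI, hne => by
    have hIout : ∀ x ∈ I, x ∈ (node pl ts).outcomes :=
      fun x hx => List.mem_toFinset.1 (hI hx)
    obtain ⟨b, hb, hmax⟩ := I.exists_max_image (payOf pl) hne
    obtain ⟨t, ht, hbt⟩ := mem_outcomes_node.1 (hIout b hb)
    have hsub : survivors (payOf pl) ts I ⊆ t.outcomes.toFinset :=
      survivors_subset_of_forall_le ((hsp.injOn_payOf pl).mono hIout)
        (fun x hx => mem_outcomes_node.1 (hIout x hx))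
        (fun _ _ _ ht _ ht' hx hx' => hsp.eq_of_mem_outcomes ht ht' hx hx') hb hmax ht hbt
    obtain ⟨o, ho⟩ :=
      exists_ppeReach (hsp.child ht) hsub ⟨b, mem_survivors_of_forall_le hb hmax⟩
    exact ⟨o, .node pl ts I t o ht hsub ho⟩

end GameTree

/-- existence and uniqueness of the Perfect Prediction Equilibrium:
the iterative discarding process starting at the root terminates with exactly
one outcome. -/
theorem ppe_exists_unique (g : GameTree) (hwf : g.WellFormed)
    (hsp : g.StrictPref) :
    ∃! o : ℤ × ℤ, GameTree.PPEReach g g.outcomes.toFinset o := by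
  obtain ⟨x, hx⟩ := hwf.exists_mem_outcomes
  obtain ⟨o, ho⟩ := GameTree.exists_ppeReach hsp subset_rfl ⟨x, List.mem_toFinset.2 hx⟩
  exact ⟨o, ho, fun o' ho' => (ho.unique hsp ho').symm⟩
end

section
/- Every nonempty finite game tree with strict preferences has exactly one maximal reaction path: a unique maximal path (r₀,…,r_l) starting at the root such that for each i > 0, every outcome descending from r_i is strictly better, for the player at r_{i-1}, than every outcome descending from each sibling of r_i. -/
open Classical

/-- A Second-Principle move: the player moves to a child whose subtree strictly
dominates (for her) all sibling subtrees. -/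
inductive SecondPrincipleStep : GameTree → GameTree → Prop
  | node (pl : Bool) (ts : List GameTree) (t : GameTree) (ht : t ∈ ts)
      (hdom : ∀ s ∈ ts, s ≠ t → ∀ o ∈ t.outcomes, ∀ o' ∈ s.outcomes,
        GameTree.payOf pl o' < GameTree.payOf pl o) :
      SecondPrincipleStep (.node pl ts) t

/-- A maximal reaction path: a path starting at the root, following
Second-Principle moves, that cannot be extended. -/
def IsMaxReactionPath (g : GameTree) (R : List GameTree) : Prop :=
  R.head? = some g ∧ R.Chain' SecondPrincipleStep ∧
    ∀ t, R.getLast? = some t → ¬ ∃ s, SecondPrincipleStep t s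

/-! A Second-Principle move goes to a child, so it strictly shrinks the tree, and on a
well-formed tree it is deterministic: two distinct dominating children would each have to beat
the other on outcomes, and every subtree has one. Hence the reaction path is forced at every step
and terminates. -/

section MaximalChain

variable {α : Type*} {r : α → α → Prop}

def IsMaximalChainFrom (r : α → α → Prop) (a : α) (l : List α) : Prop :=
  l.head? = some a ∧ l.IsChain r ∧ ∀ b, l.getLast? = some b → ¬ ∃ c, r b c

theorem IsMaximalChainFrom.exists_eq_cons {a : α} {l : List α} (h : IsMaximalChainFrom r a l) :
    ∃ l', l = a :: l' :=
  List.head?_eq_some_iff.1 h.1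

theorem isMaximalChainFrom_singleton_iff {a : α} :
    IsMaximalChainFrom r a [a] ↔ ¬ ∃ b, r a b := by
  simp [IsMaximalChainFrom]

theorem isMaximalChainFrom_cons_cons_iff {a b : α} {l : List α} :
    IsMaximalChainFrom r a (a :: b :: l) ↔ r a b ∧ IsMaximalChainFrom r b (b :: l) := by
  simp only [IsMaximalChainFrom, List.head?_cons, List.isChain_cons_cons,
    List.getLast?_cons_cons, true_and, and_assoc]

theorem existsUnique_isMaximalChainFrom (P : α → Prop) (hwf : WellFounded (flip r))
    (hclosed : ∀ {a b}, P a → r a b → P b)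
    (hdet : ∀ {a b c}, P a → r a b → r a c → b = c) {a : α} (ha : P a) :
    ∃! l, IsMaximalChainFrom r a l := by
  induction a using hwf.induction with
  | _ a ih =>
  by_cases hstep : ∃ b, r a b
  · obtain ⟨b, hab⟩ := hstep
    obtain ⟨l, hl, hl_unique⟩ := ih b hab (hclosed ha hab)
    obtain ⟨l', rfl⟩ := hl.exists_eq_cons
    refine ⟨a :: b :: l', isMaximalChainFrom_cons_cons_iff.2 ⟨hab, hl⟩, fun m hm => ?_⟩
    obtain ⟨_ | ⟨c, m'⟩, rfl⟩ := hm.exists_eq_cons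
    · exact absurd ⟨b, hab⟩ (isMaximalChainFrom_singleton_iff.1 hm)
    · obtain ⟨hac, hm'⟩ := isMaximalChainFrom_cons_cons_iff.1 hm
      obtain rfl := hdet ha hac hab
      rw [hl_unique _ hm']
  · refine ⟨[a], isMaximalChainFrom_singleton_iff.2 hstep, fun m hm => ?_⟩
    obtain ⟨_ | ⟨c, m'⟩, rfl⟩ := hm.exists_eq_cons
    · rfl
    · exact absurd ⟨c, (isMaximalChainFrom_cons_cons_iff.1 hm).1⟩ hstep

end MaximalChain

namespace GameTree

theorem WellFormed.of_mem {pl : Bool} {ts : List GameTree} {t : GameTree}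
    (h : (node pl ts).WellFormed) (ht : t ∈ ts) : t.WellFormed := by
  rw [WellFormed] at h
  exact h.2 ⟨t, ht⟩ (List.mem_attach _ _)

theorem WellFormed.outcomes_ne_nil : ∀ {g : GameTree}, g.WellFormed → g.outcomes ≠ []
  | .leaf _ _, _ => by simp [outcomes]
  | .node pl ts, h => by
    have hts : ts ≠ [] := by rw [WellFormed] at h; exact h.1
    obtain ⟨t, ht⟩ := List.exists_mem_of_ne_nil ts hts
    obtain ⟨o, ho⟩ := List.exists_mem_of_ne_nil _ (h.of_mem ht).outcomes_ne_nil
    rw [outcomes]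
    exact List.ne_nil_of_mem (List.mem_flatMap.2 ⟨⟨t, ht⟩, List.mem_attach _ _, ho⟩)
termination_by g => sizeOf g
decreasing_by
  have := List.sizeOf_lt_of_mem ht
  simp only [GameTree.node.sizeOf_spec]
  omega

end GameTree

namespace SecondPrincipleStep

theorem sizeOf_lt {g t : GameTree} (h : SecondPrincipleStep g t) : sizeOf t < sizeOf g := by
  cases h with
  | node pl ts t ht =>
    have := List.sizeOf_lt_of_mem ht
    simp only [GameTree.node.sizeOf_spec]
    omega

theorem wellFounded_flip : WellFounded (flip SecondPrincipleStep) :=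
  Subrelation.wf (fun h => sizeOf_lt h) (measure sizeOf).wf

theorem wellFormed {g t : GameTree} (hg : g.WellFormed) (h : SecondPrincipleStep g t) :
    t.WellFormed := by
  cases h with
  | node pl ts t ht => exact hg.of_mem ht

theorem unique {g t t' : GameTree} (hg : g.WellFormed)
    (h : SecondPrincipleStep g t) (h' : SecondPrincipleStep g t') : t = t' := by
  cases h with
  | node pl ts t ht hdom =>
  cases h' with
  | node _ _ t' ht' hdom' =>
  by_contra hne
  obtain ⟨o, ho⟩ := List.exists_mem_of_ne_nil _ (hg.of_mem ht).outcomes_ne_nil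
  obtain ⟨o', ho'⟩ := List.exists_mem_of_ne_nil _ (hg.of_mem ht').outcomes_ne_nil
  have := hdom t' ht' (Ne.symm hne) o ho o' ho'
  have := hdom' t ht hne o' ho' o ho
  omega

end SecondPrincipleStep

theorem reaction_path_exists_unique_general (g : GameTree) (hwf : g.WellFormed) :
    ∃! R : List GameTree, IsMaxReactionPath g R := by
  exact existsUnique_isMaximalChainFrom GameTree.WellFormed
    SecondPrincipleStep.wellFounded_flip SecondPrincipleStep.wellFormed
    SecondPrincipleStep.unique hwf

/-- every nonempty finite game tree with strict preferences has
exactly one maximal reaction path. -/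
theorem reaction_path_exists_unique (g : GameTree) (hwf : g.WellFormed)
    (hsp : g.StrictPref) :
    ∃! R : List GameTree, IsMaxReactionPath g R :=
  reaction_path_exists_unique_general g hwf
end

section
/- In the assurance game, the Perfect Prediction Equilibrium outcome is o₄ with payoffs (1,1), whereas the backward-induction (subgame perfect) outcome is o₁ with payoffs (0,0); hence the PPE outcome strictly Pareto-dominates the SPE outcome. -/
open Classical

/-- The assurance game: Peter chooses between o₁ = (0,0) and node n₂, at which
Mary chooses between o₃ = (-1,2) and o₄ = (1,1). -/
def assurance : GameTree :=
  .node true [.leaf 0 0, .node false [.leaf (-1) 2, .leaf 1 1]]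

/-! At Peter's root node, o₃ = (-1,2) is preempted: Peter can move to o₁ and get 0 > -1.
Once o₃ is gone, n₂ leads only to o₄, which Peter prefers to o₁, so the Newcombian State
`[n₂, o₁]` discards o₁. Only o₄ survives, Peter moves to n₂, and at Mary's node nothing is left
to discard. Backward induction instead lets Mary take o₃ (2 > 1), after which Peter prefers
o₁ (0 > -1). -/

namespace GameTree

variable {pay : ℤ × ℤ → ℤ} {ts : List GameTree} {I : Finset (ℤ × ℤ)} {o : ℤ × ℤ}

theorem target_cons_subset {t : GameTree} {p : List GameTree} :
    target pay I (t :: p) ⊆ I ∩ t.outcomes.toFinset := by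
  cases p with
  | nil => exact subset_rfl
  | cons _ _ => exact Finset.filter_subset _ _

theorem target_pair {t u : GameTree} :
    target pay I [t, u] = (I ∩ t.outcomes.toFinset).filter fun o =>
      ¬ ((I ∩ u.outcomes.toFinset).Nonempty ∧ ∀ o' ∈ I ∩ u.outcomes.toFinset, pay o < pay o') :=
  rfl

/-- Preemption: the one-move Newcombian State `[t]`. -/
theorem discards_of_forall_lt {t : GameTree} (ht : t ∈ ts) (ho : o ∈ I)
    (hot : o ∉ t.outcomes) (hne : (I ∩ t.outcomes.toFinset).Nonempty)
    (hlt : ∀ o' ∈ I ∩ t.outcomes.toFinset, pay o < pay o') : Discards pay ts I o :=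
  ⟨[t], List.cons_ne_nil _ _, by simpa using ht, List.isChain_singleton _, ho,
    by simpa using hot, hne, hlt⟩

theorem not_discards_of_forall_le
    (hle : ∀ t ∈ ts, o ∉ t.outcomes → ∀ o' ∈ I ∩ t.outcomes.toFinset, pay o' ≤ pay o) :
    ¬ Discards pay ts I o := by
  rintro ⟨_ | ⟨t, p⟩, hη, hts, -, -, hhead, ⟨o', ho'⟩, hlt⟩
  · exact hη rfl
  · have hot : o ∉ t.outcomes := by simpa using hhead
    exact (hle t (hts t List.mem_cons_self) hot o' (target_cons_subset ho')).not_gt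
      (hlt o' ho')

theorem survivors_eq_singleton (ho : o ∈ I) (hkeep : ¬ Discards pay ts I o)
    (hdisc : ∀ o' ∈ I, o' ≠ o → Discards pay ts I o') : survivors pay ts I = {o} := by
  ext o'
  simp only [survivors, Finset.mem_filter, Finset.mem_singleton]
  constructor
  · rintro ⟨ho', hkeep'⟩
    by_contra hne
    exact hkeep' (hdisc o' ho' hne)
  · rintro rfl
    exact ⟨ho, hkeep⟩

end GameTree

open GameTree

theorem outcomes_toFinset_assurance :
    assurance.outcomes.toFinset = {(0, 0), (-1, 2), (1, 1)} := by
  simp [assurance, outcomes]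

theorem survivors_assurance_mary :
    survivors (payOf false) [.leaf (-1) 2, .leaf 1 1] {(1, 1)} = {(1, 1)} := by
  refine survivors_eq_singleton (by simp) (not_discards_of_forall_le ?_) (by simp)
  simp

theorem survivors_assurance_root :
    survivors (payOf true) [.leaf 0 0, .node false [.leaf (-1) 2, .leaf 1 1]]
      assurance.outcomes.toFinset = {(1, 1)} := by
  rw [outcomes_toFinset_assurance]
  refine survivors_eq_singleton (by simp) (not_discards_of_forall_le ?_) ?_
  · simp [payOf]
  · simp only [Finset.mem_insert, Finset.mem_singleton]
    rintro o' (rfl | rfl | rfl) hne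
    · have htarget : target (payOf true) {(0, 0), (-1, 2), (1, 1)}
          [.node false [.leaf (-1) 2, .leaf 1 1], .leaf 0 0] = {(1, 1)} := by
        ext x
        simp [target_pair, outcomes, payOf]
        constructor
        · rintro ⟨rfl | rfl, h⟩
          · norm_num at h
          · rfl
        · rintro rfl
          norm_num
      refine ⟨[.node false [.leaf (-1) 2, .leaf 1 1], .leaf 0 0], List.cons_ne_nil _ _, by simp,
        List.isChain_pair.mpr (by simp), by simp, by simp [outcomes], ?_⟩
      simp [htarget, payOf]
    · exact discards_of_forall_lt (t := .leaf 0 0) (by simp) (by simp) (by simp [outcomes])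
        (by simp [outcomes]) (by simp [outcomes, payOf])
    · exact absurd rfl hne

theorem biOutcome_assurance : assurance.biOutcome = (0, 0) := by
  simp [assurance, biOutcome, payOf, List.argmax, List.argAux]

theorem ppeReach_assurance : PPEReach assurance assurance.outcomes.toFinset (1, 1) := by
  refine .node true _ _ _ _ (List.mem_cons_of_mem _ List.mem_cons_self) ?_ ?_ <;>
    rw [survivors_assurance_root]
  · simp [outcomes]
  · refine .node false _ _ (.leaf 1 1) _ (by simp) ?_ ?_ <;> rw [survivors_assurance_mary]
    · simp [outcomes]
    · exact .leaf 1 1 _ (Finset.mem_singleton_self _)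

/-- in the assurance game, the PPE outcome is o₄ = (1,1) while
the backward-induction (SPE) outcome is o₁ = (0,0); the PPE outcome strictly
Pareto-dominates the SPE outcome. -/
theorem assurance_ppe_vs_spe :
    GameTree.PPEReach assurance assurance.outcomes.toFinset (1, 1) ∧
    assurance.biOutcome = (0, 0) ∧
    (((0, 0) : ℤ × ℤ).1 < ((1, 1) : ℤ × ℤ).1 ∧
     ((0, 0) : ℤ × ℤ).2 < ((1, 1) : ℤ × ℤ).2) :=
  ⟨ppeReach_assurance, biOutcome_assurance, by norm_num⟩
end
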